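/- The resonance blocks cover the momentum space: with the notation of the resonance-block construction, ℝ^d = B*_0 ∪ B*_1 ∪ ... ∪ B*_d, where B*_n is the union of the blocks B_R over all resonance ℏ^{-γ}-lattices R of dimension n. -/

import Mathlib

open scoped Real BigOperators
open MeasureTheory

noncomputable section

abbrev Vec (d : ℕ) := Fin d → ℝ

/-- Real vector attached to `k ∈ ℤ^d`. -/
def zr {d : ℕ} (k : Fin d → ℤ) : Vec d := fun i => (k i : ℝ)

/-- Euclidean norm on `ℝ^d`. -/
noncomputable def enorm {d : ℕ} (v : Vec d) : ℝ := Real.sqrt (∑ i, v i ^ 2)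

/-- `Ω_X(ξ) = dH_ξ(X)`. -/
noncomputable def Om {d : ℕ} (H : Vec d → ℝ) (ξ X : Vec d) : ℝ := fderiv ℝ H ξ X

/-- Non-degeneracy of the completely integrable Hamiltonian `H`: for every nonzero
`k ∈ ℤ^d` and every `ξ` with `Ω_k(ξ) = 0`, the differential `d(Ω_k)_ξ` does not vanish. -/
def NonDeg {d : ℕ} (H : Vec d → ℝ) : Prop :=
  ∀ k : Fin d → ℤ, k ≠ 0 → ∀ ξ : Vec d, Om H ξ (zr k) = 0 →
    fderiv ℝ (fun ζ => Om H ζ (zr k)) ξ ≠ 0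

/-- `√det` of the Gram matrix of an integer basis: the volume of a fundamental domain. -/
noncomputable def latVol {d n : ℕ} (e : Fin n → Fin d → ℤ) : ℝ :=
  Real.sqrt ((Matrix.of fun i j => ((∑ t, e i t * e j t : ℤ) : ℝ)).det)

/-- `e` is a basis of a resonance `ℏ^{-γ}`-lattice: independent integer vectors of
(Euclidean) norm at most `ℏ^{-γ}`. -/
def IsResBasis (d n : ℕ) (h γ : ℝ) (e : Fin n → Fin d → ℤ) : Prop :=
  LinearIndependent ℝ (fun j => zr (e j)) ∧ ∀ j, _root_.enorm (zr (e j)) ≤ h ^ (-γ)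

/-- The lattice `R ⊂ ℤ^d` spanned by `e`. -/
def latticeOf {d n : ℕ} (e : Fin n → Fin d → ℤ) : Set (Fin d → ℤ) :=
  {k | ∃ c : Fin n → ℤ, k = ∑ j, c j • e j}

/-- The resonance zone `Z_R` of the lattice with basis `e`:
`|Ω_X(ξ)|/|X| < 2^n ℏ^{δ-γn}/vol(R)` for all nonzero `X` in the real span of `R`. -/
noncomputable def Zone {d n : ℕ} (H : Vec d → ℝ) (h γ δ : ℝ) (e : Fin n → Fin d → ℤ) :
    Set (Vec d) :=
  {ξ | ∀ X ∈ Submodule.span ℝ (Set.range fun j => zr (e j)), X ≠ 0 →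
    |Om H ξ X| / _root_.enorm X < 2 ^ n * h ^ (δ - γ * n) / latVol e}

/-- `Z*_n`: the union of the resonance zones of all resonance `ℏ^{-γ}`-lattices of
dimension `n`. -/
noncomputable def ZoneStar (d : ℕ) (H : Vec d → ℝ) (h γ δ : ℝ) (n : ℕ) : Set (Vec d) :=
  ⋃ (e : Fin n → Fin d → ℤ) (_ : IsResBasis d n h γ e), Zone H h γ δ e

/-- The resonance block `B_R = Z_R \ Z*_{n+1}`. -/
noncomputable def Block {d n : ℕ} (H : Vec d → ℝ) (h γ δ : ℝ) (e : Fin n → Fin d → ℤ) :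
    Set (Vec d) :=
  Zone H h γ δ e \ ZoneStar d H h γ δ (n + 1)

/-- `B*_n`: the union of the blocks of all resonance `ℏ^{-γ}`-lattices of dimension `n`. -/
noncomputable def BlockStar (d : ℕ) (H : Vec d → ℝ) (h γ δ : ℝ) (n : ℕ) : Set (Vec d) :=
  ⋃ (e : Fin n → Fin d → ℤ) (_ : IsResBasis d n h γ e), Block H h γ δ e

lemma zoneStar_zero (d : ℕ) (H : Vec d → ℝ) (h γ δ : ℝ) :
    ZoneStar d H h γ δ 0 = Set.univ := by
  ext ξ
  simp only [ZoneStar, Set.mem_iUnion, Set.mem_univ, iff_true]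
  refine ⟨Fin.elim0, ⟨linearIndependent_empty_type, fun j => j.elim0⟩, ?_⟩
  intro X hX hX0
  exact absurd (by simpa [Set.range_eq_empty] using hX : X = 0) hX0

lemma zoneStar_top (d : ℕ) (H : Vec d → ℝ) (h γ δ : ℝ) :
    ZoneStar d H h γ δ (d + 1) = ∅ := by
  ext ξ
  simp only [Set.mem_empty_iff_false, iff_false]
  intro hmem
  rw [ZoneStar, Set.mem_iUnion] at hmem
  obtain ⟨e, hmem⟩ := hmem
  rw [Set.mem_iUnion] at hmem
  obtain ⟨⟨hli, -⟩, -⟩ := hmem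
  have hc := hli.fintype_card_le_finrank
  simp [Module.finrank_fin_fun] at hc

/-- the resonance blocks cover the momentum space,
`ℝ^d = B*_0 ∪ B*_1 ∪ … ∪ B*_d`. -/
theorem stmt6 (d : ℕ) (H : Vec d → ℝ) (hH : ContDiff ℝ (⊤ : ℕ∞) H) (hnd : NonDeg H)
    (γ δ h : ℝ) (hh : h ∈ Set.Ioc (0:ℝ) 1) (hγ : 0 < γ) (hδ : 0 < δ) :
    Set.univ = ⋃ n ∈ Finset.range (d + 1), BlockStar d H h γ δ n := by
  classical
  ext ξ
  simp only [Set.mem_univ, true_iff, Set.mem_iUnion]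
  have hd0 : ξ ∉ ZoneStar d H h γ δ (d + 1) := by
    rw [zoneStar_top]; exact Set.notMem_empty _
  have hex : ∃ m, ξ ∉ ZoneStar d H h γ δ (m + 1) := ⟨d, hd0⟩
  set n := Nat.find hex with hn
  have hnle : n ≤ d := Nat.find_min' hex hd0
  have hnot : ξ ∉ ZoneStar d H h γ δ (n + 1) := Nat.find_spec hex
  have hin : ξ ∈ ZoneStar d H h γ δ n := by
    rcases Nat.eq_zero_or_pos n with h0 | hpos
    · rw [h0, zoneStar_zero]; trivial
    · obtain ⟨m, hm⟩ : ∃ m, n = m + 1 := ⟨n - 1, by omega⟩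
      have hlt : m < Nat.find hex := by omega
      have := Nat.find_min hex hlt
      rw [not_not] at this
      rw [hm]; exact this
  simp only [ZoneStar, Set.mem_iUnion] at hin
  obtain ⟨e, he, hz⟩ := hin
  refine ⟨n, Finset.mem_range.mpr (by omega), ?_⟩
  simp only [BlockStar, Set.mem_iUnion]
  exact ⟨e, he, hz, hnot⟩
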